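/- arXiv:0704.0010 — 10 statements merged into one kernel-verified Lean document; each statement's English description precedes it below -/
import Mathlib

section
/- A family F of finite subsets of a set X is well graded if and only if for any two sets P, Q that are adjacent in F (i.e., the interval J(P,Q) = {R ∈ F : P ∩ Q ⊆ R ⊆ P ∪ Q} equals {P, Q}), the Hamming distance |P Δ Q| equals 1. -/
/-!
Everything rests on one fact: `R` lies in the interval `J(P, Q)` iff
`d(P, R) + d(R, Q) = d(P, Q)`. If `F` is well graded and `P`, `Q` are adjacent, the first step `R`
of a geodesic from `P` to `Q` therefore lies in `J(P, Q) = {P, Q}`, so `R = Q` and `d(P, Q) = 1`.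
Conversely, argue by strong induction on `d(P, Q)`: adjacent sets are one step apart, and otherwise
some `R ∈ J(P, Q)` other than `P`, `Q` splits `d(P, Q)` into two smaller distances, and geodesics
from `P` to `R` and from `R` to `Q` concatenate.
-/

open scoped symmDiff

/-- A family `F` of finite subsets of `X` is well graded if any two distinct
members are joined by a sequence in `F` with consecutive symmetric differences
of size one, whose length is the Hamming distance between the endpoints. -/
def IsWellGraded {X : Type} [DecidableEq X] (F : Set (Finset X)) : Prop :=
  ∀ P ∈ F, ∀ Q ∈ F, P ≠ Q →
    ∃ (n : ℕ) (R : ℕ → Finset X), R 0 = P ∧ R n = Q ∧ (∀ i ≤ n, R i ∈ F) ∧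
      (∀ i < n, ((R i) ∆ (R (i + 1))).card = 1) ∧ n = (P ∆ Q).card

namespace Finset

variable {X : Type} [DecidableEq X]

theorem card_symmDiff_le_add (P R Q : Finset X) :
    (P ∆ Q).card ≤ (P ∆ R).card + (R ∆ Q).card :=
  (card_le_card (symmDiff_triangle P R Q)).trans (card_union_le _ _)

theorem disjoint_symmDiff_symmDiff_iff {P Q R : Finset X} :
    Disjoint (P ∆ R) (R ∆ Q) ↔ P ∩ Q ⊆ R ∧ R ⊆ P ∪ Q := by
  simp only [disjoint_left, subset_iff, mem_symmDiff, mem_inter, mem_union]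
  grind

theorem card_symmDiff_add_card_symmDiff_eq_iff {P Q R : Finset X} :
    (P ∆ R).card + (R ∆ Q).card = (P ∆ Q).card ↔ P ∩ Q ⊆ R ∧ R ⊆ P ∪ Q := by
  rw [← disjoint_symmDiff_symmDiff_iff]
  have hcancel : (P ∆ R) ∆ (R ∆ Q) = P ∆ Q := by
    rw [symmDiff_assoc, symmDiff_symmDiff_cancel_left]
  constructor
  · intro hsum
    have hunion := card_union_add_card_inter (P ∆ R) (R ∆ Q)
    have hle : (P ∆ Q).card ≤ ((P ∆ R) ∪ (R ∆ Q)).card :=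
      card_le_card (symmDiff_triangle P R Q)
    rw [disjoint_iff_inter_eq_empty, ← card_eq_zero]
    omega
  · intro hdisj
    rw [← card_union_of_disjoint hdisj, ← hcancel, hdisj.symmDiff_eq_sup, sup_eq_union]

end Finset

open Finset

section

variable {X : Type} [DecidableEq X]

inductive HammingWalk (F : Set (Finset X)) : Finset X → Finset X → ℕ → Prop
  | nil {P : Finset X} : P ∈ F → HammingWalk F P P 0
  | cons {P R Q : Finset X} {n : ℕ} :
      P ∈ F → (P ∆ R).card = 1 → HammingWalk F R Q n → HammingWalk F P Q (n + 1)

namespace HammingWalk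

variable {F : Set (Finset X)}

theorem single {P Q : Finset X} (hP : P ∈ F) (hQ : Q ∈ F) (h : (P ∆ Q).card = 1) :
    HammingWalk F P Q 1 :=
  cons hP h (nil hQ)

theorem trans {P Q S : Finset X} {m n : ℕ} (h₁ : HammingWalk F P Q m)
    (h₂ : HammingWalk F Q S n) : HammingWalk F P S (m + n) := by
  induction h₁ with
  | nil _ => simpa using h₂
  | cons hP hstep _ ih => simpa [Nat.add_right_comm] using cons hP hstep (ih h₂)

theorem card_symmDiff_le {P Q : Finset X} {n : ℕ} (h : HammingWalk F P Q n) :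
    (P ∆ Q).card ≤ n := by
  induction h with
  | nil _ => simp
  | @cons P R Q n _ hstep _ ih => have := card_symmDiff_le_add P R Q; omega

theorem iff_exists_seq {P Q : Finset X} {n : ℕ} :
    HammingWalk F P Q n ↔ ∃ R : ℕ → Finset X, R 0 = P ∧ R n = Q ∧ (∀ i ≤ n, R i ∈ F) ∧
      ∀ i < n, (R i ∆ R (i + 1)).card = 1 := by
  constructor
  · intro h
    induction h with
    | @nil P hP => exact ⟨fun _ => P, rfl, rfl, fun _ _ => hP, fun _ h => absurd h (by omega)⟩
    | @cons P R Q n hP hstep _ ih =>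
      obtain ⟨S, hS0, hSn, hSF, hSstep⟩ := ih
      refine ⟨fun | 0 => P | i + 1 => S i, rfl, hSn, ?_, ?_⟩
      · rintro (_ | i) hi
        exacts [hP, hSF i (by omega)]
      · rintro (_ | i) hi
        exacts [by simpa [hS0] using hstep, hSstep i (by omega)]
  · induction n generalizing P with
    | zero =>
      rintro ⟨R, rfl, rfl, hRF, -⟩
      exact nil (hRF 0 le_rfl)
    | succ n ih =>
      rintro ⟨R, rfl, rfl, hRF, hRstep⟩
      exact cons (hRF 0 (by omega)) (hRstep 0 (by omega))
        (ih ⟨fun i => R (i + 1), rfl, rfl, fun i hi => hRF _ (by omega),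
          fun i hi => hRstep _ (by omega)⟩)

theorem mem_left {P Q : Finset X} {n : ℕ} (h : HammingWalk F P Q n) : P ∈ F := by
  cases h with
  | nil hP => exact hP
  | cons hP _ _ => exact hP

theorem exists_step_mem_interval {P Q : Finset X} {n : ℕ} (h : HammingWalk F P Q n)
    (hn : n ≤ (P ∆ Q).card) (hPQ : P ≠ Q) :
    ∃ R ∈ F, (P ∆ R).card = 1 ∧ P ∩ Q ⊆ R ∧ R ⊆ P ∪ Q := by
  cases h with
  | nil _ => exact absurd rfl hPQ
  | @cons _ R _ n _ hstep hwalk =>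
    refine ⟨R, hwalk.mem_left, hstep, card_symmDiff_add_card_symmDiff_eq_iff.mp ?_⟩
    have := hwalk.card_symmDiff_le
    have := card_symmDiff_le_add P R Q
    omega

end HammingWalk

theorem isWellGraded_iff_hammingWalk {F : Set (Finset X)} :
    IsWellGraded F ↔ ∀ P ∈ F, ∀ Q ∈ F, P ≠ Q → HammingWalk F P Q (P ∆ Q).card := by
  refine forall₄_congr fun P _ Q _ => imp_congr_right fun _ => ?_
  rw [HammingWalk.iff_exists_seq]
  constructor
  · rintro ⟨_, R, h0, hn, hF, hstep, rfl⟩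
    exact ⟨R, h0, hn, hF, hstep⟩
  · rintro ⟨R, h0, hn, hF, hstep⟩
    exact ⟨_, R, h0, hn, hF, hstep, rfl⟩

theorem hammingWalk_of_adjacent {F : Set (Finset X)}
    (hadj : ∀ P ∈ F, ∀ Q ∈ F, P ≠ Q →
      {R : Finset X | R ∈ F ∧ P ∩ Q ⊆ R ∧ R ⊆ P ∪ Q} = {P, Q} → (P ∆ Q).card = 1)
    {P Q : Finset X} (hP : P ∈ F) (hQ : Q ∈ F) : HammingWalk F P Q (P ∆ Q).card := by
  induction hd : (P ∆ Q).card using Nat.strong_induction_on generalizing P Q with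
  | _ d ih =>
  subst hd
  by_cases hPQ : P = Q
  · subst hPQ
    simpa using HammingWalk.nil hP
  have hsub : {P, Q} ⊆ {R : Finset X | R ∈ F ∧ P ∩ Q ⊆ R ∧ R ⊆ P ∪ Q} := by
    rintro _ (rfl | rfl)
    exacts [⟨hP, inter_subset_left, subset_union_left⟩,
      ⟨hQ, inter_subset_right, subset_union_right⟩]
  by_cases hJ : {R : Finset X | R ∈ F ∧ P ∩ Q ⊆ R ∧ R ⊆ P ∪ Q} = {P, Q}
  · rw [hadj P hP Q hQ hPQ hJ]
    exact .single hP hQ (hadj P hP Q hQ hPQ hJ)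
  obtain ⟨R, ⟨hR, hbetween⟩, hRPQ⟩ :=
    Set.exists_of_ssubset (hsub.ssubset_of_ne (Ne.symm hJ))
  simp only [Set.mem_insert_iff, Set.mem_singleton_iff, not_or] at hRPQ
  have hPR : 0 < (P ∆ R).card := card_pos.mpr (symmDiff_nonempty.mpr (Ne.symm hRPQ.1))
  have hRQ : 0 < (R ∆ Q).card := card_pos.mpr (symmDiff_nonempty.mpr hRPQ.2)
  have hsum := card_symmDiff_add_card_symmDiff_eq_iff.mpr hbetween
  rw [← hsum]
  exact (ih _ (by omega) hP hR rfl).trans (ih _ (by omega) hR hQ rfl)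

end

/-- A family of finite subsets of `X` is well graded if and only if any two sets
`P`, `Q` that are adjacent in `F` (the interval of `F` between them is `{P, Q}`)
are at Hamming distance `1`. -/
theorem wellGraded_iff_adjacent_dist_one {X : Type} [DecidableEq X]
    (F : Set (Finset X)) :
    IsWellGraded F ↔
      ∀ P ∈ F, ∀ Q ∈ F, P ≠ Q →
        {R : Finset X | R ∈ F ∧ P ∩ Q ⊆ R ∧ R ⊆ P ∪ Q} = {P, Q} →
        (P ∆ Q).card = 1 := by
  rw [isWellGraded_iff_hammingWalk]
  constructor
  · intro hwalk P hP Q hQ hPQ hJ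
    obtain ⟨R, hR, hPR, hbetween⟩ :=
      (hwalk P hP Q hQ hPQ).exists_step_mem_interval le_rfl hPQ
    have hRPQ : R ∈ ({P, Q} : Set (Finset X)) := hJ ▸ ⟨hR, hbetween⟩
    rcases hRPQ with rfl | rfl
    · simp at hPR
    · exact hPR
  · exact fun hadj P hP Q hQ _ => hammingWalk_of_adjacent hadj hP hQ
end

section
/- The graph G_F defined by a well graded family F of subsets of X (vertices are members of F, edges are pairs {P,Q} with |P Δ Q| = 1, where all symmetric differences of members of F are finite) is isometric to a subgraph of the hypercube on X induced by a well graded family of finite subsets of X. -/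
/-! The family `P ↦ P ∆ P₀` for a fixed `P₀ ∈ F` embeds `F` into the finite sets, and since
`(P ∆ P₀) ∆ (Q ∆ P₀) = P ∆ Q` it preserves Hamming distances. A distance-preserving map carries
geodesic chains of singleton steps to such chains, so its image is again well graded. -/

open scoped symmDiff

/-- Well gradedness for a family of arbitrary subsets of `X` whose pairwise
symmetric differences are finite. -/
def IsWellGradedSets {X : Type} (F : Set (Set X)) : Prop :=
  ∀ P ∈ F, ∀ Q ∈ F, P ≠ Q →
    (P ∆ Q).Finite ∧
    ∃ (n : ℕ) (R : ℕ → Set X), R 0 = P ∧ R n = Q ∧ (∀ i ≤ n, R i ∈ F) ∧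
      (∀ i < n, ((R i) ∆ (R (i + 1))).ncard = 1) ∧ n = (P ∆ Q).ncard

/-- Well gradedness for a family of finite subsets of `X`. -/
def IsWellGradedFinsets {X : Type} [DecidableEq X] (F : Set (Finset X)) : Prop :=
  ∀ P ∈ F, ∀ Q ∈ F, P ≠ Q →
    ∃ (n : ℕ) (R : ℕ → Finset X), R 0 = P ∧ R n = Q ∧ (∀ i ≤ n, R i ∈ F) ∧
      (∀ i < n, ((R i) ∆ (R (i + 1))).card = 1) ∧ n = (P ∆ Q).card

open Classical in
/-- `P ∆ Q` as a finset; junk value `∅` when `P ∆ Q` is infinite. -/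
noncomputable def symmDiffFinset {X : Type} (P Q : Set X) : Finset X :=
  if h : (P ∆ Q).Finite then h.toFinset else ∅

theorem coe_symmDiffFinset {X : Type} {P Q : Set X} (h : (P ∆ Q).Finite) :
    (symmDiffFinset P Q : Set X) = P ∆ Q := by
  simp [symmDiffFinset, h]

theorem card_symmDiff_symmDiffFinset {X : Type} [DecidableEq X] {P Q R : Set X}
    (hP : (P ∆ R).Finite) (hQ : (Q ∆ R).Finite) :
    (symmDiffFinset P R ∆ symmDiffFinset Q R).card = (P ∆ Q).ncard := by
  have hcoe : ((symmDiffFinset P R ∆ symmDiffFinset Q R : Finset X) : Set X) = P ∆ Q := by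
    rw [Finset.coe_symmDiff, coe_symmDiffFinset hP, coe_symmDiffFinset hQ,
      symmDiff_symmDiff_symmDiff_comm, symmDiff_self, symmDiff_bot]
  rw [← Set.ncard_coe_finset, hcoe]

namespace IsWellGradedSets

variable {X : Type} {F : Set (Set X)}

theorem exists_forall_finite_symmDiff (hwg : IsWellGradedSets F) :
    ∃ P₀ : Set X, ∀ P ∈ F, (P ∆ P₀).Finite := by
  rcases F.eq_empty_or_nonempty with rfl | ⟨P₀, hP₀⟩
  · exact ⟨∅, by simp⟩
  · refine ⟨P₀, fun P hP => ?_⟩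
    by_cases h : P = P₀
    · simp [h]
    · exact (hwg P hP P₀ hP₀ h).1

variable [DecidableEq X] {f : Set X → Finset X}

theorem injOn_of_card_symmDiff (hwg : IsWellGradedSets F)
    (hf : ∀ P ∈ F, ∀ Q ∈ F, (f P ∆ f Q).card = (P ∆ Q).ncard) : Set.InjOn f F := by
  intro P hP Q hQ hPQ
  by_contra hne
  have hzero : (P ∆ Q).ncard = 0 := by rw [← hf P hP Q hQ, hPQ, symmDiff_self]; rfl
  rw [Set.ncard_eq_zero (hwg P hP Q hQ hne).1] at hzero
  exact hne (symmDiff_eq_bot.mp hzero)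

theorem isWellGradedFinsets_image (hwg : IsWellGradedSets F)
    (hf : ∀ P ∈ F, ∀ Q ∈ F, (f P ∆ f Q).card = (P ∆ Q).ncard) :
    IsWellGradedFinsets (f '' F) := by
  rintro _ ⟨P, hP, rfl⟩ _ ⟨Q, hQ, rfl⟩ hne
  obtain ⟨-, n, R, hR0, hRn, hRF, hRstep, hlen⟩ :=
    hwg P hP Q hQ fun h => hne (congrArg f h)
  refine ⟨n, f ∘ R, congrArg f hR0, congrArg f hRn, fun i hi => ⟨R i, hRF i hi, rfl⟩,
    fun i hi => ?_, by rw [hf P hP Q hQ, hlen]⟩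
  rw [Function.comp_apply, Function.comp_apply, hf _ (hRF i hi.le) _ (hRF (i + 1) hi)]
  exact hRstep i hi

end IsWellGradedSets

/-- The graph `G_F` defined by a well graded family `F` of subsets of `X`
(with pairwise finite symmetric differences) is isometric to the subgraph of the
hypercube `H(X)` induced by a well graded family of finite subsets of `X`:
there is a bijection of `F` onto a well graded family of finite subsets of `X`
preserving the Hamming distance (hence preserving the graph structure and the
graph distances). -/
theorem wellGradedSets_isometric_wellGradedFinsets {X : Type} [DecidableEq X]
    (F : Set (Set X)) (hwg : IsWellGradedSets F) :
    ∃ (G : Set (Finset X)) (f : Set X → Finset X),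
      IsWellGradedFinsets G ∧ Set.BijOn f F G ∧
      ∀ P ∈ F, ∀ Q ∈ F, ((f P) ∆ (f Q)).card = (P ∆ Q).ncard := by
  obtain ⟨P₀, hP₀⟩ := hwg.exists_forall_finite_symmDiff
  have hdist : ∀ P ∈ F, ∀ Q ∈ F,
      (symmDiffFinset P P₀ ∆ symmDiffFinset Q P₀).card = (P ∆ Q).ncard :=
    fun P hP Q hQ => card_symmDiff_symmDiffFinset (hP₀ P hP) (hP₀ Q hQ)
  exact ⟨_, _, hwg.isWellGradedFinsets_image hdist,
    ⟨Set.mapsTo_image _ F, hwg.injOn_of_card_symmDiff hdist, Set.surjOn_image _ F⟩, hdist⟩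
end

section
/- A connected graph G = (V, E) is bipartite if and only if for every edge ab ∈ E, the semicubes W_ab and W_ba form a partition of V. -/
/-- The semicube `W_ab` of a graph: the set of vertices closer to `a` than to `b`. -/
def semicube {V : Type} (G : SimpleGraph V) (a b : V) : Set V :=
  {w | G.dist w a < G.dist w b}

/-!
In a bipartite graph every closed walk has even length, so a vertex `w` cannot be equidistant
from the two ends of an edge `ab`: two shortest paths and the edge would close an odd walk.
Conversely, if no vertex is equidistant from the ends of an edge, the distances from a fixed
root to the ends of every edge differ by exactly one, so their parity is a proper 2-colouring.
-/

namespace SimpleGraph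

variable {V : Type*} {G : SimpleGraph V}

theorem Colorable.dist_ne_of_adj (hG : G.Colorable 2) {u v w : V} (hadj : G.Adj v w)
    (hreach : G.Reachable u v) : G.dist u v ≠ G.dist u w := by
  obtain ⟨p, hp⟩ := hreach.exists_walk_length_eq_dist
  obtain ⟨q, hq⟩ := (hreach.trans hadj.reachable).exists_walk_length_eq_dist
  have heven := two_colorable_iff_forall_loop_even.1 hG u ((p.concat hadj).append q.reverse)
  rw [Walk.length_append, Walk.length_concat, Walk.length_reverse, hp, hq] at heven
  intro h
  rw [← h] at heven
  exact Nat.not_even_iff_odd.2 ⟨G.dist u v, by ring⟩ heven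

theorem colorable_two_of_forall_adj_dist_ne (u : V)
    (h : ∀ v w, G.Adj v w → G.dist u v ≠ G.dist u w) : G.Colorable 2 := by
  refine (Coloring.mk (fun v => decide (Even (G.dist u v))) fun {v w} hadj => ?_).colorable
  have hne := h v w hadj
  rcases hadj.diff_dist_adj (u := u) with heq | hsucc | hpred
  · exact absurd heq.symm hne
  · simp only [hsucc, Nat.even_add_one, ne_eq, decide_eq_decide]
    tauto
  · have hsucc : G.dist u v = G.dist u w + 1 := by omega
    simp only [hsucc, Nat.even_add_one, ne_eq, decide_eq_decide]
    tauto

end SimpleGraph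

theorem disjoint_semicube_semicube {V : Type} (G : SimpleGraph V) (a b : V) :
    Disjoint (semicube G a b) (semicube G b a) :=
  Set.disjoint_left.2 fun w (hab : G.dist w a < G.dist w b) hba => lt_asymm hab hba

theorem semicube_union_semicube_eq_univ_iff {V : Type} (G : SimpleGraph V) (a b : V) :
    semicube G a b ∪ semicube G b a = Set.univ ↔ ∀ w, G.dist w a ≠ G.dist w b := by
  simp only [Set.eq_univ_iff_forall, Set.mem_union, semicube, Set.mem_ofPred_eq, ne_iff_lt_or_gt]

/-- A connected graph is bipartite if and only if for every edge `ab` the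
opposite semicubes `W_ab` and `W_ba` form a partition of the vertex set. -/
theorem bipartite_iff_semicubes_partition {V : Type} (G : SimpleGraph V)
    (hconn : G.Connected) :
    G.Colorable 2 ↔
      ∀ a b : V, G.Adj a b →
        semicube G a b ∪ semicube G b a = Set.univ ∧
        Disjoint (semicube G a b) (semicube G b a) := by
  simp only [disjoint_semicube_semicube, and_true, semicube_union_semicube_eq_univ_iff]
  constructor
  · exact fun hG a b hab w => hG.dist_ne_of_adj hab (hconn w a)
  · obtain ⟨r⟩ := hconn.nonempty
    exact fun h => SimpleGraph.colorable_two_of_forall_adj_dist_ne r fun a b hab => h a b hab r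
end

section
/- Djoković's relation θ on the edge set of a connected graph is symmetric: if edge xy stands in relation θ to edge uv (i.e., uv joins a vertex of W_xy with a vertex of W_yx), then xy joins a vertex of W_uv with a vertex of W_vu. -/
namespace SimpleGraph

variable {V : Type} {G : SimpleGraph V}

lemma Adj.dist_le_dist_add_one {v w : V} (hadj : G.Adj v w) (u : V) :
    G.dist u w ≤ G.dist u v + 1 := by
  rcases hadj.diff_dist_adj (u := u) with h | h | h <;> omega

lemma mem_semicube_of_adj_of_mem_semicube {x y u v : V} (huv : G.Adj u v)
    (hu : u ∈ semicube G x y) (hv : v ∈ semicube G y x) : x ∈ semicube G u v := by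
  show G.dist x u < G.dist x v
  calc G.dist x u = G.dist u x := G.dist_comm
    _ < G.dist u y := hu
    _ = G.dist y u := G.dist_comm
    _ ≤ G.dist y v + 1 := huv.symm.dist_le_dist_add_one y
    _ = G.dist v y + 1 := by rw [G.dist_comm]
    _ ≤ G.dist v x := hv
    _ = G.dist x v := G.dist_comm

end SimpleGraph

theorem theta_symm_general {V : Type} (G : SimpleGraph V)
    (x y u v : V) (huv : G.Adj u v)
    (h : (u ∈ semicube G x y ∧ v ∈ semicube G y x) ∨
         (v ∈ semicube G x y ∧ u ∈ semicube G y x)) :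
    (x ∈ semicube G u v ∧ y ∈ semicube G v u) ∨
    (y ∈ semicube G u v ∧ x ∈ semicube G v u) := by
  rcases h with ⟨hu, hv⟩ | ⟨hv, hu⟩
  · exact Or.inl ⟨SimpleGraph.mem_semicube_of_adj_of_mem_semicube huv hu hv,
      SimpleGraph.mem_semicube_of_adj_of_mem_semicube huv.symm hv hu⟩
  · exact Or.inr ⟨SimpleGraph.mem_semicube_of_adj_of_mem_semicube huv hu hv,
      SimpleGraph.mem_semicube_of_adj_of_mem_semicube huv.symm hv hu⟩

/-- Djoković's relation `θ` is symmetric: if the edge `uv` joins a vertex of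
`W_xy` with a vertex of `W_yx`, then the edge `xy` joins a vertex of `W_uv`
with a vertex of `W_vu`. -/
theorem theta_symm {V : Type} (G : SimpleGraph V) (hconn : G.Connected)
    (x y u v : V) (hxy : G.Adj x y) (huv : G.Adj u v)
    (h : (u ∈ semicube G x y ∧ v ∈ semicube G y x) ∨
         (v ∈ semicube G x y ∧ u ∈ semicube G y x)) :
    (x ∈ semicube G u v ∧ y ∈ semicube G v u) ∨
    (y ∈ semicube G u v ∧ x ∈ semicube G v u) :=
  theta_symm_general G x y u v huv h
end

section
/- Let G be a connected bipartite graph in which all semicubes are convex. Then two edges xy and uv stand in relation θ if and only if {W_xy, W_yx} = {W_uv, W_vu} as unordered pairs of sets. -/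
/-- A set of vertices is convex if it contains every vertex lying on a shortest
path between two of its members. -/
def GraphConvex {V : Type} (G : SimpleGraph V) (S : Set V) : Prop :=
  ∀ u ∈ S, ∀ v ∈ S, ∀ w : V, G.dist u w + G.dist w v = G.dist u v → w ∈ S

/-!
In a bipartite graph no vertex is equidistant from the two ends of an edge, so the semicubes
`W_ab` and `W_ba` of an edge `ab` partition the vertex set. If an edge `uv` crosses this
partition, with `u ∈ W_ab` and `v ∈ W_ba`, then `W_ab ⊆ W_uv`: a vertex `w ∈ W_ab` with
`w ∈ W_vu` sees `v` on a geodesic from `w` to `u`, which convexity of `W_ab` forbids.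
The same argument for `ba` and `vu`, after taking complements, gives the reverse inclusion.
-/

open SimpleGraph

section Semicube

variable {V : Type} {G : SimpleGraph V} {a b u v w : V}

lemma SimpleGraph.Colorable.dist_ne_of_adj_s8 (hbip : G.Colorable 2) (hw : G.Reachable w a)
    (hab : G.Adj a b) : G.dist w a ≠ G.dist w b := by
  obtain ⟨p, hp⟩ := hw.exists_walk_length_eq_dist
  obtain ⟨q, hq⟩ := (hw.trans hab.reachable).symm.exists_walk_length_eq_dist
  have hloop := two_colorable_iff_forall_loop_even.mp hbip w (p.append (.cons hab q))
  rw [Walk.length_append, Walk.length_cons, hp, hq, dist_comm (u := b)] at hloop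
  intro h
  rw [h, ← add_assoc, ← two_mul] at hloop
  exact Nat.not_even_two_mul_add_one _ hloop

@[simp]
lemma mem_semicube : w ∈ semicube G a b ↔ G.dist w a < G.dist w b := Iff.rfl

lemma SimpleGraph.Adj.mem_semicube (hab : G.Adj a b) : a ∈ semicube G a b := by
  simp [dist_eq_one_iff_adj.mpr hab]

lemma semicube_swap_eq_compl (hG : G.Preconnected) (hbip : G.Colorable 2) (hab : G.Adj a b) :
    semicube G b a = (semicube G a b)ᶜ := by
  ext w
  have := hbip.dist_ne_of_adj_s8 (hG w a) hab
  simp only [mem_semicube, Set.mem_compl_iff, not_lt]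
  omega

lemma semicube_subset_of_mem_of_mem (hG : G.Preconnected) (hbip : G.Colorable 2)
    (hconv : GraphConvex G (semicube G a b)) (huv : G.Adj u v)
    (hu : u ∈ semicube G a b) (hv : v ∈ semicube G b a) :
    semicube G a b ⊆ semicube G u v := by
  intro w hw
  by_contra hwuv
  have hwvu : w ∈ semicube G v u := by rwa [semicube_swap_eq_compl hG hbip huv]
  rw [mem_semicube] at hwvu
  have hgeod : G.dist w v + G.dist v u = G.dist w u := by
    rw [dist_eq_one_iff_adj.mpr huv.symm]
    rcases huv.diff_dist_adj (u := w) with h | h | h <;> omega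
  have hva : v ∈ semicube G a b := hconv w hw u hu v hgeod
  rw [mem_semicube] at hva hv
  omega

lemma semicube_eq_of_mem_of_mem (hG : G.Preconnected) (hbip : G.Colorable 2)
    (hab : G.Adj a b) (huv : G.Adj u v) (hconv_ab : GraphConvex G (semicube G a b))
    (hconv_ba : GraphConvex G (semicube G b a))
    (hu : u ∈ semicube G a b) (hv : v ∈ semicube G b a) :
    semicube G a b = semicube G u v := by
  refine (semicube_subset_of_mem_of_mem hG hbip hconv_ab huv hu hv).antisymm ?_
  have hsub := semicube_subset_of_mem_of_mem hG hbip hconv_ba huv.symm hv hu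
  rwa [semicube_swap_eq_compl hG hbip hab, semicube_swap_eq_compl hG hbip huv,
    Set.compl_subset_compl] at hsub

lemma mem_semicube_and_mem_semicube_iff (hG : G.Preconnected) (hbip : G.Colorable 2)
    (hab : G.Adj a b) (huv : G.Adj u v) (hconv_ab : GraphConvex G (semicube G a b))
    (hconv_ba : GraphConvex G (semicube G b a)) :
    (u ∈ semicube G a b ∧ v ∈ semicube G b a) ↔
      semicube G a b = semicube G u v ∧ semicube G b a = semicube G v u := by
  constructor
  · rintro ⟨hu, hv⟩
    exact ⟨semicube_eq_of_mem_of_mem hG hbip hab huv hconv_ab hconv_ba hu hv,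
      semicube_eq_of_mem_of_mem hG hbip hab.symm huv.symm hconv_ba hconv_ab hv hu⟩
  · rintro ⟨hab_uv, hba_vu⟩
    exact ⟨hab_uv ▸ huv.mem_semicube, hba_vu ▸ huv.symm.mem_semicube⟩

end Semicube

/-- In a connected bipartite graph all of whose semicubes are convex, two edges
`xy` and `uv` stand in relation `θ` if and only if the corresponding pairs of
opposite semicubes form equal partitions: `{W_xy, W_yx} = {W_uv, W_vu}`. -/
theorem theta_iff_same_semicube_pair {V : Type} (G : SimpleGraph V)
    (hconn : G.Connected) (hbip : G.Colorable 2)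
    (hconv : ∀ a b : V, G.Adj a b → GraphConvex G (semicube G a b))
    (x y u v : V) (hxy : G.Adj x y) (huv : G.Adj u v) :
    ((u ∈ semicube G x y ∧ v ∈ semicube G y x) ∨
     (v ∈ semicube G x y ∧ u ∈ semicube G y x)) ↔
    ({semicube G x y, semicube G y x} : Set (Set V)) =
      {semicube G u v, semicube G v u} := by
  have hG := hconn.preconnected
  have hconv_xy := hconv x y hxy
  have hconv_yx := hconv y x hxy.symm
  rw [Set.pair_eq_pair_iff]
  exact or_congr (mem_semicube_and_mem_semicube_iff hG hbip hxy huv hconv_xy hconv_yx)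
    (mem_semicube_and_mem_semicube_iff hG hbip hxy huv.symm hconv_xy hconv_yx)
end

section
/- No two distinct edges of a shortest path in a connected graph stand in Djoković's relation θ to each other. -/
namespace SimpleGraph

variable {V : Type*} {G : SimpleGraph V} {n : ℕ} {x : ℕ → V}

theorem reachable_of_chain (hadj : ∀ i < n, G.Adj (x i) (x (i + 1)))
    {a b : ℕ} (hab : a ≤ b) (hbn : b ≤ n) : G.Reachable (x a) (x b) := by
  induction b, hab using Nat.le_induction with
  | base => rfl
  | succ b _ ih => exact (ih (by omega)).trans (hadj b (by omega)).reachable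

theorem dist_le_sub_of_chain (hadj : ∀ i < n, G.Adj (x i) (x (i + 1)))
    {a b : ℕ} (hab : a ≤ b) (hbn : b ≤ n) : G.dist (x a) (x b) ≤ b - a := by
  induction b, hab using Nat.le_induction with
  | base => simp
  | succ b _ ih =>
    have hstep := hadj b (by omega)
    calc G.dist (x a) (x (b + 1)) ≤ G.dist (x a) (x b) + G.dist (x b) (x (b + 1)) :=
          hstep.reachable.dist_triangle_right _
      _ ≤ (b - a) + 1 := by
          rw [dist_eq_one_iff_adj.mpr hstep]; exact Nat.add_le_add_right (ih (by omega)) 1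
      _ = b + 1 - a := by omega

theorem dist_eq_sub_of_chain (hadj : ∀ i < n, G.Adj (x i) (x (i + 1)))
    (hshort : G.dist (x 0) (x n) = n) {a b : ℕ} (hab : a ≤ b) (hbn : b ≤ n) :
    G.dist (x a) (x b) = b - a := by
  have h0a_le := dist_le_sub_of_chain hadj (Nat.zero_le a) (hab.trans hbn)
  have hab_le := dist_le_sub_of_chain hadj hab hbn
  have hbn_le := dist_le_sub_of_chain hadj hbn le_rfl
  have h0n : G.dist (x 0) (x n) ≤ G.dist (x 0) (x a) + G.dist (x a) (x b) + G.dist (x b) (x n) :=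
    calc G.dist (x 0) (x n) ≤ G.dist (x 0) (x b) + G.dist (x b) (x n) :=
          (reachable_of_chain hadj (Nat.zero_le b) hbn).dist_triangle_left _
      _ ≤ G.dist (x 0) (x a) + G.dist (x a) (x b) + G.dist (x b) (x n) := by
          gcongr
          exact (reachable_of_chain hadj (Nat.zero_le a) (hab.trans hbn)).dist_triangle_left _
  omega

end SimpleGraph

theorem notMem_semicube_of_mem_semicube_swap {V : Type} {G : SimpleGraph V} {a b w : V}
    (h : w ∈ semicube G b a) : w ∉ semicube G a b :=
  fun h' => (lt_asymm h : ¬ G.dist w a < G.dist w b) h'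

theorem mem_semicube_of_chain {V : Type} {G : SimpleGraph V} {n : ℕ} {x : ℕ → V}
    (hadj : ∀ i < n, G.Adj (x i) (x (i + 1))) (hshort : G.dist (x 0) (x n) = n)
    {i k : ℕ} (hik : i < k) (hkn : k ≤ n) : x k ∈ semicube G (x (i + 1)) (x i) := by
  have hnear := SimpleGraph.dist_eq_sub_of_chain hadj hshort hik hkn
  have hfar := SimpleGraph.dist_eq_sub_of_chain hadj hshort hik.le hkn
  show G.dist (x k) (x (i + 1)) < G.dist (x k) (x i)
  rw [SimpleGraph.dist_comm, hnear, SimpleGraph.dist_comm, hfar]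
  omega

theorem shortest_path_edges_not_theta_general {V : Type} (G : SimpleGraph V)
    (n : ℕ) (x : ℕ → V)
    (hadj : ∀ i < n, G.Adj (x i) (x (i + 1)))
    (hshort : G.dist (x 0) (x n) = n)
    (i j : ℕ) (hij : i < j) (hjn : j < n) :
    ¬ ((x j ∈ semicube G (x i) (x (i + 1)) ∧
        x (j + 1) ∈ semicube G (x (i + 1)) (x i)) ∨
       (x (j + 1) ∈ semicube G (x i) (x (i + 1)) ∧
        x j ∈ semicube G (x (i + 1)) (x i))) := by
  have hj := mem_semicube_of_chain hadj hshort hij hjn.le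
  have hj' := mem_semicube_of_chain hadj hshort (hij.trans j.lt_succ_self) hjn
  rintro (⟨hj_far, -⟩ | ⟨hj'_far, -⟩)
  · exact notMem_semicube_of_mem_semicube_swap hj hj_far
  · exact notMem_semicube_of_mem_semicube_swap hj' hj'_far

/-- No two distinct edges of a shortest path in a connected graph stand in
Djoković's relation `θ`: if `x_0, …, x_n` is a shortest path (consecutive
vertices are adjacent and `d(x_0, x_n) = n`) and `i < j < n`, then the edge
`x_j x_{j+1}` does not join a vertex of `W_{x_i x_{i+1}}` with a vertex of
`W_{x_{i+1} x_i}`. -/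
theorem shortest_path_edges_not_theta {V : Type} (G : SimpleGraph V)
    (hconn : G.Connected) (n : ℕ) (x : ℕ → V)
    (hadj : ∀ i < n, G.Adj (x i) (x (i + 1)))
    (hshort : G.dist (x 0) (x n) = n)
    (i j : ℕ) (hij : i < j) (hjn : j < n) :
    ¬ ((x j ∈ semicube G (x i) (x (i + 1)) ∧
        x (j + 1) ∈ semicube G (x (i + 1)) (x i)) ∨
       (x (j + 1) ∈ semicube G (x i) (x (i + 1)) ∧
        x j ∈ semicube G (x (i + 1)) (x i))) :=
  shortest_path_edges_not_theta_general G n x hadj hshort i j hij hjn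
end

section
/- Every partial cube (connected graph isometrically embeddable into a hypercube) is bipartite and all of its semicubes are convex. -/
open scoped symmDiff

/-- A partial cube is a connected graph which embeds isometrically into a
hypercube `H(X)` (vertices: the finite subsets of `X`; distance: the Hamming
distance, i.e. the cardinality of the symmetric difference). -/
def IsPartialCube {V : Type} (G : SimpleGraph V) : Prop :=
  G.Connected ∧ ∃ (X : Type) (f : V → Set X),
    (∀ u, (f u).Finite) ∧ ∀ u v : V, (f u ∆ f v).ncard = G.dist u v

/-!
Label the vertices by finite sets `F v` with `#(F u ∆ F v) = d(u, v)`. Adjacent labels differ in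
exactly one element, so the parity of `#(F v)` is a proper 2-colouring. If `F a ∆ F b = {p}`, then
`W_ab` is the set of `x` whose label agrees with `F a` at `p`. On a shortest path from `u` to `v`
through `w` the changes `F u ∆ F w` and `F w ∆ F v` are disjoint, so `w` cannot differ at `p` from
both `u` and `v`; hence `W_ab` is convex.
-/

open Finset

namespace Finset

variable {X : Type} [DecidableEq X]

theorem card_symmDiff_add_two_mul_card_inter (s t : Finset X) :
    #(s ∆ t) + 2 * #(s ∩ t) = #s + #t := by
  have hdisj : Disjoint (s \ t) (t \ s) := disjoint_sdiff_sdiff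
  rw [symmDiff_def, sup_eq_union, card_union_of_disjoint hdisj]
  have := card_sdiff_add_card_inter s t
  have := card_sdiff_add_card_inter t s
  rw [inter_comm t s] at this
  omega

theorem card_lt_card_symmDiff_singleton_iff {s : Finset X} {p : X} :
    #s < #(s ∆ {p}) ↔ p ∉ s := by
  have h := card_symmDiff_add_two_mul_card_inter s {p}
  by_cases hp : p ∈ s
  · rw [inter_singleton_of_mem hp, card_singleton] at h
    simp only [hp, not_true_eq_false, iff_false]
    omega
  · rw [inter_singleton_of_notMem hp, card_empty, card_singleton] at h
    simp only [hp, not_false_eq_true, iff_true]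
    omega

theorem disjoint_symmDiff_of_card_symmDiff_add_eq {u v w : Finset X}
    (h : #(u ∆ w) + #(w ∆ v) = #(u ∆ v)) : Disjoint (u ∆ w) (w ∆ v) := by
  have hcomp : (u ∆ w) ∆ (w ∆ v) = u ∆ v := by
    rw [symmDiff_assoc, symmDiff_symmDiff_cancel_left]
  have := card_symmDiff_add_two_mul_card_inter (u ∆ w) (w ∆ v)
  rw [hcomp] at this
  exact disjoint_iff_inter_eq_empty.mpr (card_eq_zero.mp (by omega))

end Finset

namespace SimpleGraph

variable {V X : Type} [DecidableEq X]

def IsHammingIsometry (G : SimpleGraph V) (F : V → Finset X) : Prop :=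
  ∀ u v, #(F u ∆ F v) = G.dist u v

variable {G : SimpleGraph V} {F : V → Finset X}

theorem IsHammingIsometry.card_symmDiff_of_adj (hF : G.IsHammingIsometry F) {u v : V}
    (huv : G.Adj u v) : #(F u ∆ F v) = 1 := by
  rw [hF, dist_eq_one_iff_adj.mpr huv]

theorem colorable_two_of_card_symmDiff_eq_one (hF : ∀ u v, G.Adj u v → #(F u ∆ F v) = 1) :
    G.Colorable 2 := by
  refine ⟨Coloring.mk (fun v => ⟨#(F v) % 2, Nat.mod_lt _ two_pos⟩) fun {u v} huv hcol => ?_⟩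
  have hpar : #(F u) % 2 = #(F v) % 2 := Fin.ext_iff.mp hcol
  have := card_symmDiff_add_two_mul_card_inter (F u) (F v)
  rw [hF u v huv] at this
  omega

theorem IsHammingIsometry.semicube_eq (hF : G.IsHammingIsometry F) {a b : V} {p : X}
    (hab : F a ∆ F b = {p}) : semicube G a b = {x | p ∉ F x ∆ F a} := by
  ext x
  have hxb : F x ∆ F b = (F x ∆ F a) ∆ {p} := by
    rw [← hab, symmDiff_assoc, symmDiff_symmDiff_cancel_left]
  rw [semicube, Set.mem_ofPred_eq, Set.mem_ofPred_eq, ← hF, ← hF, hxb,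
    card_lt_card_symmDiff_singleton_iff]

theorem IsHammingIsometry.graphConvex_setOf_notMem_symmDiff (hF : G.IsHammingIsometry F)
    (c : Finset X) (p : X) : GraphConvex G {x | p ∉ F x ∆ c} := by
  intro u hu v hv w hw
  rw [← hF, ← hF, ← hF] at hw
  have hdisj := disjoint_symmDiff_of_card_symmDiff_add_eq hw
  by_contra hwc
  simp only [Set.mem_ofPred_eq, mem_symmDiff] at hu hv hwc
  have hpuw : p ∈ F u ∆ F w := by simp only [mem_symmDiff]; tauto
  have hpwv : p ∈ F w ∆ F v := by simp only [mem_symmDiff]; tauto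
  exact Finset.disjoint_left.mp hdisj hpuw hpwv

end SimpleGraph

theorem IsPartialCube.exists_isHammingIsometry {V : Type} {G : SimpleGraph V}
    (h : IsPartialCube G) :
    ∃ (X : Type) (_ : DecidableEq X) (F : V → Finset X), G.IsHammingIsometry F := by
  classical
  obtain ⟨-, X, f, hfin, hdist⟩ := h
  refine ⟨X, inferInstance, fun v => (hfin v).toFinset, fun u v => ?_⟩
  rw [← Set.ncard_coe_finset, coe_symmDiff, Set.Finite.coe_toFinset, Set.Finite.coe_toFinset]
  exact hdist u v

/-- Every partial cube is bipartite and all of its semicubes are convex. -/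
theorem partialCube_bipartite_and_semicubes_convex {V : Type}
    (G : SimpleGraph V) (h : IsPartialCube G) :
    G.Colorable 2 ∧ ∀ a b : V, G.Adj a b → GraphConvex G (semicube G a b) := by
  obtain ⟨X, _, F, hF⟩ := h.exists_isHammingIsometry
  refine ⟨SimpleGraph.colorable_two_of_card_symmDiff_eq_one fun u v => hF.card_symmDiff_of_adj, ?_⟩
  intro a b hab
  obtain ⟨p, hp⟩ := card_eq_one.mp (hF.card_symmDiff_of_adj hab)
  rw [hF.semicube_eq hp]
  exact hF.graphConvex_setOf_notMem_symmDiff (F a) p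
end

section
/- A connected graph G is a partial cube if and only if G is bipartite and Djoković's relation θ is an equivalence relation on the edge set of G. -/
/-!
In a partial cube `f : V → Set X`, an edge `xy` flips a single coordinate `i`, and `W_xy` is the
set of vertices agreeing with `x` at `i`. Hence every vertex is strictly closer to one end of each
edge, which forces bipartiteness, and `θ` relates exactly the edges flipping the same
coordinate.

Conversely, in a bipartite graph `W_xy` and `W_yx` are complementary. If `θ` is transitive, every
`W_xy` is convex: a geodesic leaving and re-entering `W_xy` would carry two edges `θ`-related to
`xy`, hence to each other, which the metric along a geodesic forbids. Convexity gives `W_ab = W_xy`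
for every edge `ab` crossing from `W_xy` to `W_yx`, so stepping along a geodesic shows that exactly
`d(u, v)` semicubes contain `u` but not `v`. Picking from each complementary pair the semicube
that avoids a base vertex `v₀` embeds `G` isometrically into the hypercube on the set of
semicubes.
-/

open scoped symmDiff

/-- Djoković's relation `θ` on the edge set of a graph: `e θ f` iff for some
orientations `e = xy` and `f = uv`, the edge `f` joins a vertex of `W_xy` with
a vertex of `W_yx`. -/
def DjokovicRel {V : Type} (G : SimpleGraph V) (e f : G.edgeSet) : Prop :=
  ∃ x y u v : V, (e : Sym2 V) = s(x, y) ∧ (f : Sym2 V) = s(u, v) ∧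
    u ∈ semicube G x y ∧ v ∈ semicube G y x

namespace Set

variable {α : Type*}

theorem ncard_symmDiff_singleton_of_mem {S : Set α} {i : α} (hS : S.Finite) (hi : i ∈ S) :
    (S ∆ {i}).ncard + 1 = S.ncard := by
  have : S ∆ {i} = S \ {i} := by
    ext z
    by_cases hz : z = i <;> simp [mem_symmDiff, hz, hi]
  rw [this, ncard_sdiff_singleton_add_one hi hS]

theorem ncard_symmDiff_singleton_of_notMem {S : Set α} {i : α} (hS : S.Finite) (hi : i ∉ S) :
    (S ∆ {i}).ncard = S.ncard + 1 := by
  have : S ∆ {i} = insert i S := by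
    ext z
    by_cases hz : z = i <;> simp [mem_symmDiff, hz, hi]
  rw [this, ncard_insert_of_notMem hi hS]

variable (𝒮 : Set (Set α))

def separating (u v : α) : Set (Set α) := {W | W ∈ 𝒮 ∧ u ∈ W ∧ v ∉ W}

@[simp]
theorem separating_self (u : α) : separating 𝒮 u u = ∅ :=
  eq_empty_of_forall_notMem fun _ ⟨_, hu, hu'⟩ => hu' hu

theorem encard_separating_symmDiff (h𝒮 : ∀ W ∈ 𝒮, Wᶜ ∈ 𝒮) (a u v : α) :
    (separating 𝒮 u a ∆ separating 𝒮 v a).encard = (separating 𝒮 u v).encard := by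
  set P : Set (Set α) := {W | a ∈ W}
  have hsplit : separating 𝒮 u a ∆ separating 𝒮 v a =
      (separating 𝒮 u v \ P) ∪ (separating 𝒮 v u \ P) := by
    ext W
    simp only [separating, P, mem_symmDiff, mem_union, mem_sdiff, mem_ofPred_eq]
    tauto
  have hcompl : separating 𝒮 v u \ P = compl '' (separating 𝒮 u v ∩ P) := by
    ext W
    constructor
    · rintro ⟨⟨hW, hv, hu⟩, ha⟩
      exact ⟨Wᶜ, ⟨⟨h𝒮 W hW, hu, not_not.2 hv⟩, ha⟩, compl_compl W⟩
    · rintro ⟨W, ⟨⟨hW, hu, hv⟩, ha⟩, rfl⟩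
      exact ⟨⟨h𝒮 W hW, hv, not_not.2 hu⟩, not_not.2 ha⟩
  have hdisj : Disjoint (separating 𝒮 u v \ P) (separating 𝒮 v u \ P) :=
    disjoint_left.2 fun _ ⟨⟨_, hu, _⟩, _⟩ ⟨⟨_, _, hu'⟩, _⟩ => hu' hu
  rw [hsplit, encard_union_eq hdisj, hcompl, compl_injective.encard_image,
    encard_sdiff_add_encard_inter]

end Set

namespace SimpleGraph

variable {V : Type} {G : SimpleGraph V}

theorem djokovicRel_iff {e f : G.edgeSet} {x y u v : V} (he : (e : Sym2 V) = s(x, y))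
    (hf : (f : Sym2 V) = s(u, v)) :
    DjokovicRel G e f ↔ u ∈ semicube G x y ∧ v ∈ semicube G y x ∨
      v ∈ semicube G x y ∧ u ∈ semicube G y x := by
  constructor
  · rintro ⟨x', y', u', v', he', hf', hu, hv⟩
    rw [he, Sym2.eq_iff] at he'
    rw [hf, Sym2.eq_iff] at hf'
    rcases he' with ⟨rfl, rfl⟩ | ⟨rfl, rfl⟩ <;> rcases hf' with ⟨rfl, rfl⟩ | ⟨rfl, rfl⟩ <;>
      tauto
  · rintro (⟨hu, hv⟩ | ⟨hv, hu⟩)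
    · exact ⟨x, y, u, v, he, hf, hu, hv⟩
    · exact ⟨x, y, v, u, he, hf.trans Sym2.eq_swap, hv, hu⟩

theorem notMem_semicube_of_mem {x y w : V} (hw : w ∈ semicube G x y) : w ∉ semicube G y x :=
  fun h : G.dist w y < G.dist w x => lt_asymm hw h

theorem Connected.dist_add_dist_eq_of_mem_semicube (hconn : G.Connected) {a b w : V}
    (hab : G.Adj a b) (hw : w ∈ semicube G a b) : G.dist w a + G.dist a b = G.dist w b := by
  have : G.dist w b ≤ G.dist w a + G.dist a b := hconn.dist_triangle
  rw [dist_eq_one_iff_adj.2 hab] at this ⊢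
  exact le_antisymm (Nat.succ_le_of_lt hw) this

theorem Connected.exists_adj_dist_add_one (hconn : G.Connected) {u v : V} (huv : u ≠ v) :
    ∃ w, G.Adj w v ∧ G.dist u w + 1 = G.dist u v := by
  obtain ⟨p, hp⟩ := hconn.exists_walk_length_eq_dist v u
  have hnil : ¬ p.Nil := fun h => huv h.eq.symm
  refine ⟨p.snd, (p.adj_snd hnil).symm, ?_⟩
  have hle : G.dist p.snd u ≤ p.tail.length := dist_le p.tail
  have htri : G.dist v u ≤ G.dist v p.snd + G.dist p.snd u := hconn.dist_triangle
  rw [dist_eq_one_iff_adj.2 (p.adj_snd hnil)] at htri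
  have := p.length_tail_add_one hnil
  rw [dist_comm, dist_comm (u := u)]
  omega

theorem Connected.exists_adj_mem_notMem (hconn : G.Connected) {S : Set V} {u v : V}
    (hu : u ∈ S) (hv : v ∉ S) :
    ∃ a b, G.Adj a b ∧ a ∈ S ∧ b ∉ S ∧ G.dist u a + 1 + G.dist b v = G.dist u v := by
  obtain ⟨n, hn⟩ : ∃ n, G.dist u v = n := ⟨_, rfl⟩
  induction n generalizing v with
  | zero => exact absurd (hconn.dist_eq_zero_iff.1 hn ▸ hu) hv
  | succ n ih =>
    obtain ⟨w, hwv, hw⟩ := hconn.exists_adj_dist_add_one (ne_of_mem_of_not_mem hu hv)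
    by_cases hwS : w ∈ S
    · exact ⟨w, v, hwv, hwS, hv, by rw [dist_self]; omega⟩
    obtain ⟨a, b, hab, ha, hb, hdist⟩ := ih hwS (by omega)
    refine ⟨a, b, hab, ha, hb, ?_⟩
    have h₁ : G.dist b v ≤ G.dist b w + G.dist w v := hconn.dist_triangle
    have h₂ : G.dist u b ≤ G.dist u a + G.dist a b := hconn.dist_triangle
    have h₃ : G.dist u v ≤ G.dist u b + G.dist b v := hconn.dist_triangle
    rw [dist_eq_one_iff_adj.2 hwv] at h₁
    rw [dist_eq_one_iff_adj.2 hab] at h₂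
    omega

theorem Connected.colorable_two_iff (hconn : G.Connected) :
    G.Colorable 2 ↔ ∀ ⦃x y⦄, G.Adj x y → ∀ w, G.dist w x ≠ G.dist w y := by
  constructor
  · rintro ⟨c⟩ x y hxy w hdist
    let c' : G.Coloring Bool := recolorOfEquiv G finTwoEquiv c
    obtain ⟨p, hp⟩ := hconn.exists_walk_length_eq_dist w x
    obtain ⟨q, hq⟩ := hconn.exists_walk_length_eq_dist w y
    have hpq : (c' w ↔ c' x) ↔ (c' w ↔ c' y) := by
      rw [← c'.even_length_iff_congr p, ← c'.even_length_iff_congr q, hp, hq, hdist]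
    have hxy' : c' x ≠ c' y := c'.valid hxy
    revert hpq hxy'
    cases c' w <;> cases c' x <;> cases c' y <;> simp
  · intro h
    obtain ⟨v₀⟩ := hconn.nonempty
    have hvalid : ∀ {x y}, G.Adj x y →
        decide (Even (G.dist v₀ x)) ≠ decide (Even (G.dist v₀ y)) := by
      intro x y hxy
      have hne := h hxy v₀
      have : G.dist v₀ y = G.dist v₀ x + 1 ∨ G.dist v₀ x = G.dist v₀ y + 1 := by
        rcases hxy.diff_dist_adj (u := v₀) with h' | h' | h' <;> omega
      rcases this with h' | h' <;>
        simp only [h', Nat.even_add_one, ne_eq, decide_eq_decide] <;> tauto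
    simpa using (Coloring.mk _ hvalid).colorable

section Isometry

variable {X : Type} {f : V → Set X}

theorem exists_symmDiff_eq_singleton_of_adj (hd : ∀ u v, (f u ∆ f v).ncard = G.dist u v)
    {x y : V} (hxy : G.Adj x y) : ∃ i, f x ∆ f y = {i} :=
  Set.ncard_eq_one.1 ((hd x y).trans (dist_eq_one_iff_adj.2 hxy))

theorem mem_semicube_iff_notMem_symmDiff (hfin : ∀ u, (f u).Finite)
    (hd : ∀ u v, (f u ∆ f v).ncard = G.dist u v) {x y : V} {i : X} (hi : f x ∆ f y = {i})
    (w : V) : w ∈ semicube G x y ↔ i ∉ f w ∆ f x := by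
  have hS : (f w ∆ f x).Finite := ((hfin w).union (hfin x)).subset Set.symmDiff_subset_union
  have hy : f w ∆ f y = f w ∆ f x ∆ {i} := by
    rw [← hi, symmDiff_assoc, symmDiff_symmDiff_cancel_left]
  have hdx := hd w x
  have hdy := hd w y
  rw [hy] at hdy
  simp only [semicube, Set.mem_ofPred_eq]
  by_cases hmem : i ∈ f w ∆ f x
  · have := Set.ncard_symmDiff_singleton_of_mem hS hmem
    simp only [hmem, not_true_eq_false, iff_false]
    omega
  · have := Set.ncard_symmDiff_singleton_of_notMem hS hmem
    simp only [hmem, not_false_eq_true, iff_true]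
    omega

def edgeLabel (f : V → Set X) : Sym2 V → Set X :=
  Sym2.lift ⟨fun x y => f x ∆ f y, fun _ _ => symmDiff_comm _ _⟩

theorem djokovicRel_iff_edgeLabel_eq (hfin : ∀ u, (f u).Finite)
    (hd : ∀ u v, (f u ∆ f v).ncard = G.dist u v) (e e' : G.edgeSet) :
    DjokovicRel G e e' ↔ edgeLabel f e = edgeLabel f e' := by
  obtain ⟨e, he⟩ := e
  obtain ⟨e', he'⟩ := e'
  induction e using Sym2.ind with | _ x y => ?_
  induction e' using Sym2.ind with | _ u v => ?_
  obtain ⟨i, hi⟩ := exists_symmDiff_eq_singleton_of_adj hd (G.mem_edgeSet.1 he)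
  obtain ⟨j, hj⟩ := exists_symmDiff_eq_singleton_of_adj hd (G.mem_edgeSet.1 he')
  have hi' : i ∈ f x ∆ f y := hi ▸ rfl
  have hij : i ∈ f u ∆ f v ↔ i = j := by rw [hj]; rfl
  rw [djokovicRel_iff rfl rfl, mem_semicube_iff_notMem_symmDiff hfin hd hi,
    mem_semicube_iff_notMem_symmDiff hfin hd hi,
    mem_semicube_iff_notMem_symmDiff hfin hd ((symmDiff_comm (f y) (f x)).trans hi),
    mem_semicube_iff_notMem_symmDiff hfin hd ((symmDiff_comm (f y) (f x)).trans hi)]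
  simp only [edgeLabel, Sym2.lift_mk, hi, hj, Set.singleton_eq_singleton_iff]
  simp only [Set.mem_symmDiff] at hi' hij ⊢
  tauto

end Isometry

theorem _root_.IsPartialCube.colorable_two (h : IsPartialCube G) : G.Colorable 2 := by
  obtain ⟨hconn, X, f, hfin, hd⟩ := h
  refine hconn.colorable_two_iff.2 fun x y hxy w hw => ?_
  obtain ⟨i, hi⟩ := exists_symmDiff_eq_singleton_of_adj hd hxy
  have hx := mem_semicube_iff_notMem_symmDiff hfin hd hi w
  have hy :=
    mem_semicube_iff_notMem_symmDiff hfin hd ((symmDiff_comm (f y) (f x)).trans hi) w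
  have hi' : i ∈ f x ∆ f y := hi ▸ rfl
  simp only [semicube, Set.mem_ofPred_eq, hw, lt_irrefl, false_iff, not_not,
    Set.mem_symmDiff] at hx hy hi'
  tauto

theorem _root_.IsPartialCube.equivalence_djokovicRel (h : IsPartialCube G) :
    Equivalence (DjokovicRel G) := by
  obtain ⟨-, X, f, hfin, hd⟩ := h
  rw [show DjokovicRel G = fun e e' : G.edgeSet => edgeLabel f e = edgeLabel f e' from
    funext₂ fun e e' => propext (djokovicRel_iff_edgeLabel_eq hfin hd e e')]
  exact ⟨fun _ => rfl, Eq.symm, Eq.trans⟩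

def semicubes (G : SimpleGraph V) : Set (Set V) :=
  {W | ∃ x y, G.Adj x y ∧ semicube G x y = W}

theorem Connected.compl_semicube (hconn : G.Connected) (hbip : G.Colorable 2) {x y : V}
    (hxy : G.Adj x y) : (semicube G x y)ᶜ = semicube G y x := by
  ext w
  have := hconn.colorable_two_iff.1 hbip hxy w
  simp only [semicube, Set.mem_compl_iff, Set.mem_ofPred_eq]
  omega

theorem Connected.graphConvex_semicube (hconn : G.Connected) (hbip : G.Colorable 2)
    (hθ : Equivalence (DjokovicRel G)) {x y : V} (hxy : G.Adj x y) :
    GraphConvex G (semicube G x y) := by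
  intro u hu w hw z hz
  by_contra hzW
  obtain ⟨a, b, hab, ha, hb, hdab⟩ := hconn.exists_adj_mem_notMem hu hzW
  obtain ⟨d, c, hdc, hd, hc, hddc⟩ := hconn.exists_adj_mem_notMem hw hzW
  rw [← Set.mem_compl_iff, hconn.compl_semicube hbip hxy] at hb hc
  have hθab : DjokovicRel G ⟨s(x, y), hxy⟩ ⟨s(a, b), hab⟩ :=
    (djokovicRel_iff rfl rfl).2 (.inl ⟨ha, hb⟩)
  have hθdc : DjokovicRel G ⟨s(x, y), hxy⟩ ⟨s(d, c), hdc⟩ :=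
    (djokovicRel_iff rfl rfl).2 (.inl ⟨hd, hc⟩)
  have hθ' := (djokovicRel_iff rfl rfl).1 (hθ.trans (hθ.symm hθab) hθdc)
  -- `u, a, b, z, c, d, w` lie in this order on a geodesic, so both `c` and `d` are closer to `b`
  -- than to `a`, whereas `hθ'` separates them.
  have t₁ : G.dist u w ≤ G.dist u a + G.dist a w := hconn.dist_triangle
  have t₂ : G.dist a w ≤ G.dist a c + G.dist c w := hconn.dist_triangle
  have t₃ : G.dist c w ≤ G.dist c d + G.dist d w := hconn.dist_triangle
  have t₄ : G.dist c b ≤ G.dist c z + G.dist z b := hconn.dist_triangle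
  have t₅ : G.dist a w ≤ G.dist a d + G.dist d w := hconn.dist_triangle
  have t₆ : G.dist d b ≤ G.dist d c + G.dist c b := hconn.dist_triangle
  have hcd : G.dist c d = 1 := dist_eq_one_iff_adj.2 hdc.symm
  simp only [semicube, Set.mem_ofPred_eq] at hθ'
  simp only [dist_comm (G := G)] at *
  omega

theorem Connected.semicube_subset_of_mem (hconn : G.Connected) (hbip : G.Colorable 2)
    (hθ : Equivalence (DjokovicRel G)) {x y a b : V} (hxy : G.Adj x y) (hab : G.Adj a b)
    (ha : a ∈ semicube G x y) (hb : b ∈ semicube G y x) :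
    semicube G a b ⊆ semicube G x y := by
  intro w hw
  by_contra hw'
  rw [← Set.mem_compl_iff, hconn.compl_semicube hbip hxy] at hw'
  have haW := hconn.graphConvex_semicube hbip hθ hxy.symm w hw' b hb a
    (hconn.dist_add_dist_eq_of_mem_semicube hab hw)
  exact notMem_semicube_of_mem ha haW

theorem Connected.semicube_eq_of_mem (hconn : G.Connected) (hbip : G.Colorable 2)
    (hθ : Equivalence (DjokovicRel G)) {x y a b : V} (hxy : G.Adj x y) (hab : G.Adj a b)
    (ha : a ∈ semicube G x y) (hb : b ∈ semicube G y x) :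
    semicube G a b = semicube G x y := by
  refine (hconn.semicube_subset_of_mem hbip hθ hxy hab ha hb).antisymm ?_
  rw [← hconn.compl_semicube hbip hxy.symm, ← hconn.compl_semicube hbip hab.symm]
  exact Set.compl_subset_compl.2 (hconn.semicube_subset_of_mem hbip hθ hxy.symm hab.symm hb ha)

theorem Connected.separating_semicubes_eq_insert (hconn : G.Connected) (hbip : G.Colorable 2)
    (hθ : Equivalence (DjokovicRel G)) {u v' v : V} (hadj : G.Adj v' v)
    (hu : u ∈ semicube G v' v) :
    Set.separating (semicubes G) u v =
      insert (semicube G v' v) (Set.separating (semicubes G) u v') := by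
  ext W
  simp only [Set.separating, semicubes, Set.mem_insert_iff, Set.mem_ofPred_eq]
  constructor
  · rintro ⟨⟨x, y, hxy, rfl⟩, huW, hvW⟩
    by_cases hv'W : v' ∈ semicube G x y
    · rw [← Set.mem_compl_iff, hconn.compl_semicube hbip hxy] at hvW
      exact .inl (hconn.semicube_eq_of_mem hbip hθ hxy hadj hv'W hvW).symm
    · exact .inr ⟨⟨x, y, hxy, rfl⟩, huW, hv'W⟩
  · rintro (rfl | ⟨⟨x, y, hxy, rfl⟩, huW, hv'W⟩)
    · exact ⟨⟨v', v, hadj, rfl⟩, hu, by simp [semicube]⟩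
    · refine ⟨⟨x, y, hxy, rfl⟩, huW, fun hvW => ?_⟩
      rw [← Set.mem_compl_iff, hconn.compl_semicube hbip hxy] at hv'W
      rw [← hconn.semicube_eq_of_mem hbip hθ hxy hadj.symm hvW hv'W] at huW
      exact notMem_semicube_of_mem hu huW

theorem Connected.encard_separating_semicubes (hconn : G.Connected) (hbip : G.Colorable 2)
    (hθ : Equivalence (DjokovicRel G)) (u v : V) :
    (Set.separating (semicubes G) u v).encard = G.dist u v := by
  obtain ⟨n, hn⟩ : ∃ n, G.dist u v = n := ⟨_, rfl⟩
  induction n generalizing v with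
  | zero => simp [hconn.dist_eq_zero_iff.1 hn]
  | succ n ih =>
    obtain ⟨v', hadj, hv'⟩ := hconn.exists_adj_dist_add_one (u := u) (v := v)
      (by rintro rfl; simp at hn)
    have hu : u ∈ semicube G v' v := by
      simp only [semicube, Set.mem_ofPred_eq]
      omega
    have hnotMem : semicube G v' v ∉ Set.separating (semicubes G) u v' :=
      fun h => h.2.2 (by simpa [semicube] using hconn.pos_dist_of_ne hadj.ne)
    rw [hconn.separating_semicubes_eq_insert hbip hθ hadj hu,
      Set.encard_insert_of_notMem hnotMem, ih v' (by omega), ← hv', Nat.cast_succ]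

theorem Connected.isPartialCube (hconn : G.Connected) (hbip : G.Colorable 2)
    (hθ : Equivalence (DjokovicRel G)) : IsPartialCube G := by
  obtain ⟨v₀⟩ := hconn.nonempty
  have hcompl : ∀ W ∈ semicubes G, Wᶜ ∈ semicubes G := by
    rintro _ ⟨x, y, hxy, rfl⟩
    exact ⟨y, x, hxy.symm, (hconn.compl_semicube hbip hxy).symm⟩
  have hcard (u v : V) : (Set.separating (semicubes G) u v₀ ∆
      Set.separating (semicubes G) v v₀).encard = G.dist u v :=
    (Set.encard_separating_symmDiff _ hcompl v₀ u v).trans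
      (hconn.encard_separating_semicubes hbip hθ u v)
  refine ⟨hconn, Set V, fun v => Set.separating (semicubes G) v v₀, fun u => ?_,
    fun u v => ?_⟩
  · have := hcard u v₀
    rw [Set.separating_self, ← Set.bot_eq_empty, symmDiff_bot] at this
    exact Set.finite_of_encard_eq_coe this
  · rw [Set.ncard_def, hcard u v, ENat.toNat_natCast]

end SimpleGraph

/-- A connected graph is a partial cube if and only if it is bipartite and
Djoković's relation `θ` is an equivalence relation on its edge set. -/
theorem partialCube_iff_bipartite_and_theta_equivalence {V : Type}
    (G : SimpleGraph V) (hconn : G.Connected) :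
    IsPartialCube G ↔ G.Colorable 2 ∧ Equivalence (DjokovicRel G) :=
  ⟨fun h => ⟨h.colorable_two, h.equivalence_djokovicRel⟩,
    fun ⟨hbip, hθ⟩ => hconn.isPartialCube hbip hθ⟩
end

section
/- Let F be a well graded family of subsets of X with ∩F = ∅ and ∪F = X. Then for every x ∈ X there exist P, Q ∈ F with P Δ Q = {x}. -/
/-! Along a tight path from a member `P ∋ x` of `F` to a member `Q ∌ x`, some step
leaves `x` behind; that step changes exactly one point, which must be `x`. -/

open scoped symmDiff

theorem Nat.exists_lt_and_not_succ {p : ℕ → Prop} {n : ℕ} (h0 : p 0) (hn : ¬ p n) :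
    ∃ i < n, p i ∧ ¬ p (i + 1) := by
  induction n with
  | zero => exact absurd h0 hn
  | succ n ih =>
    by_cases h : p n
    · exact ⟨n, n.lt_succ_self, h, hn⟩
    · obtain ⟨i, hi, hpi, hpi'⟩ := ih h
      exact ⟨i, hi.trans n.lt_succ_self, hpi, hpi'⟩

theorem Set.eq_singleton_of_ncard_eq_one_of_mem {α : Type*} {s : Set α} {a : α}
    (hs : s.ncard = 1) (ha : a ∈ s) : s = {a} := by
  obtain ⟨b, rfl⟩ := Set.ncard_eq_one.mp hs
  rw [Set.mem_singleton_iff.mp ha]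

theorem IsWellGradedSets.exists_symmDiff_eq_singleton {X : Type} {F : Set (Set X)}
    (hwg : IsWellGradedSets F) {P Q : Set X} (hP : P ∈ F) (hQ : Q ∈ F) {x : X}
    (hxP : x ∈ P) (hxQ : x ∉ Q) : ∃ P' ∈ F, ∃ Q' ∈ F, P' ∆ Q' = {x} := by
  have hPQ : P ≠ Q := by rintro rfl; exact hxQ hxP
  obtain ⟨-, n, R, rfl, rfl, hRF, hstep, -⟩ := hwg P hP Q hQ hPQ
  obtain ⟨i, hin, hxi, hxi'⟩ := Nat.exists_lt_and_not_succ (p := (x ∈ R ·)) hxP hxQ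
  exact ⟨R i, hRF i hin.le, R (i + 1), hRF (i + 1) hin,
    Set.eq_singleton_of_ncard_eq_one_of_mem (hstep i hin) (Or.inl ⟨hxi, hxi'⟩)⟩

/-- Let `F` be a well graded family of subsets of `X` with `∩F = ∅` and
`∪F = X`.  Then for every `x ∈ X` there are `P, Q ∈ F` with `P ∆ Q = {x}`. -/
theorem exists_edge_for_each_coordinate {X : Type}
    (F : Set (Set X)) (hwg : IsWellGradedSets F)
    (hinter : ⋂₀ F = ∅) (hunion : ⋃₀ F = Set.univ) :
    ∀ x : X, ∃ P ∈ F, ∃ Q ∈ F, P ∆ Q = {x} := by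
  intro x
  obtain ⟨P, hP, hxP⟩ : x ∈ ⋃₀ F := hunion ▸ Set.mem_univ x
  obtain ⟨Q, hQ, hxQ⟩ : ∃ Q ∈ F, x ∉ Q := by
    simpa [Set.mem_sInter] using (hinter ▸ Set.notMem_empty x : x ∉ ⋂₀ F)
  exact hwg.exists_symmDiff_eq_singleton hP hQ hxP hxQ
end

section
/- Let G be the graph obtained by vertex-pasting (identifying a vertex a1 of G1 with a vertex a2 of G2) of two partial cubes G1 and G2. Then G is a partial cube. -/
open scoped symmDiff

/-! Since every walk between `A` and `B` passes through the cut vertex `a`, the map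
`v ↦ (retraction of v to A, retraction of v to B)`, which collapses the far side onto `a`,
is an isometric embedding of `G` into the box product `G[A] □ G[B]`. Box products of partial
cubes are partial cubes (concatenate the two Hamming embeddings on `X ⊕ Y`), and so is every
nonempty graph that maps into a partial cube preserving the extended distance `edist`. -/

namespace Set

variable {α β : Type*}

theorem sumEquiv_symm_symmDiff (p q : Set α × Set β) :
    sumEquiv.symm p ∆ sumEquiv.symm q = sumEquiv.symm (p ∆ q) := by
  ext (x | x) <;> simp [Set.mem_symmDiff]

theorem ncard_sumEquiv_symm {p : Set α × Set β} (h₁ : p.1.Finite) (h₂ : p.2.Finite) :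
    (sumEquiv.symm p).ncard = p.1.ncard + p.2.ncard := by
  rw [sumEquiv_symm_apply, ncard_union_eq disjoint_image_inl_image_inr (h₁.image _) (h₂.image _),
    ncard_image_of_injective _ Sum.inl_injective, ncard_image_of_injective _ Sum.inr_injective]

end Set

namespace SimpleGraph

variable {V W : Type*} {G : SimpleGraph V} {H : SimpleGraph W}

theorem Hom.edist_le (f : G →g H) (u v : V) : H.edist (f u) (f v) ≤ G.edist u v := by
  by_cases huv : G.Reachable u v
  · obtain ⟨p, hp⟩ := huv.exists_walk_length_eq_edist
    rw [← hp, ← p.length_map f]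
    exact (p.map f).edist_le
  · rw [edist_eq_top_of_not_reachable huv]
    exact le_top

variable {α β : Type*} {G₁ : SimpleGraph α} {G₂ : SimpleGraph β}

theorem Connected.dist_boxProd (h₁ : G₁.Connected) (h₂ : G₂.Connected) (x y : α × β) :
    (G₁ □ G₂).dist x y = G₁.dist x.1 y.1 + G₂.dist x.2 y.2 := by
  apply Nat.cast_injective (R := ℕ∞)
  rw [((h₁.boxProd h₂) x y).coe_dist_eq_edist, edist_boxProd, Nat.cast_add,
    (h₁ x.1 y.1).coe_dist_eq_edist, (h₂ x.2 y.2).coe_dist_eq_edist]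

end SimpleGraph

open SimpleGraph

theorem IsPartialCube.boxProd {V W : Type} {G : SimpleGraph V} {H : SimpleGraph W}
    (hG : IsPartialCube G) (hH : IsPartialCube H) : IsPartialCube (G □ H) := by
  obtain ⟨hGc, X, f, hf, hfG⟩ := hG
  obtain ⟨hHc, Y, g, hg, hgH⟩ := hH
  refine ⟨hGc.boxProd hHc, X ⊕ Y, fun x ↦ Set.sumEquiv.symm (f x.1, g x.2),
    fun x ↦ (Set.finite_union.2 ⟨(hf _).image _, (hg _).image _⟩), fun x y ↦ ?_⟩
  rw [Set.sumEquiv_symm_symmDiff,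
    Set.ncard_sumEquiv_symm ((hf _).symmDiff (hf _)) ((hg _).symmDiff (hg _)),
    hGc.dist_boxProd hHc]
  exact congrArg₂ (· + ·) (hfG _ _) (hgH _ _)

theorem IsPartialCube.of_edist_eq {V W : Type} {G : SimpleGraph V} {H : SimpleGraph W}
    [Nonempty V] (hH : IsPartialCube H) (φ : V → W)
    (hφ : ∀ u v, H.edist (φ u) (φ v) = G.edist u v) : IsPartialCube G := by
  obtain ⟨hHc, X, f, hf, hfH⟩ := hH
  have hGc : G.Connected := (connected_iff G).2
    ⟨fun u v ↦ edist_ne_top_iff_reachable.1 (hφ u v ▸ edist_ne_top_iff_reachable.2 (hHc _ _)),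
      inferInstance⟩
  refine ⟨hGc, X, f ∘ φ, fun u ↦ hf _, fun u v ↦ ?_⟩
  simp only [Function.comp_apply, hfH, SimpleGraph.dist, hφ]

section VertexPasting

variable {V : Type*} {A B : Set V} {a : V}

open Classical in
noncomputable def retractTo (ha : a ∈ A) (v : V) : A :=
  if h : v ∈ A then ⟨v, h⟩ else ⟨a, ha⟩

theorem retractTo_of_mem (ha : a ∈ A) {v : V} (hv : v ∈ A) : retractTo ha v = ⟨v, hv⟩ := by
  rw [retractTo, dif_pos hv]

theorem retractTo_of_mem_of_inter_eq (ha : a ∈ A) (hinter : A ∩ B = {a}) {v : V} (hv : v ∈ B) :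
    retractTo ha v = ⟨a, ha⟩ := by
  by_cases hvA : v ∈ A
  · have hva : v ∈ A ∩ B := ⟨hvA, hv⟩
    rw [hinter, Set.mem_singleton_iff] at hva
    subst hva
    exact retractTo_of_mem ha hvA
  · rw [retractTo, dif_neg hvA]

theorem retractTo_cases (hcover : A ∪ B = Set.univ) (hinter : A ∩ B = {a}) (haA : a ∈ A)
    (haB : a ∈ B) (v : V) :
    ((retractTo haA v : V) = v ∧ (retractTo haB v : V) = a) ∨
      ((retractTo haA v : V) = a ∧ (retractTo haB v : V) = v) := by
  have hinter' : B ∩ A = {a} := Set.inter_comm A B ▸ hinter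
  rcases (hcover ▸ Set.mem_univ v : v ∈ A ∪ B) with hv | hv
  · left
    rw [retractTo_of_mem haA hv, retractTo_of_mem_of_inter_eq haB hinter' hv]
    exact ⟨rfl, rfl⟩
  · right
    rw [retractTo_of_mem_of_inter_eq haA hinter hv, retractTo_of_mem haB hv]
    exact ⟨rfl, rfl⟩

variable {G : SimpleGraph V}

noncomputable def boxProdRetraction (hinter : A ∩ B = {a})
    (hedges : ∀ u v : V, G.Adj u v → (u ∈ A ∧ v ∈ A) ∨ (u ∈ B ∧ v ∈ B)) (haA : a ∈ A)
    (haB : a ∈ B) : G →g G.induce A □ G.induce B where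
  toFun v := (retractTo haA v, retractTo haB v)
  map_rel' {u v} huv := by
    have hinter' : B ∩ A = {a} := Set.inter_comm A B ▸ hinter
    rcases hedges u v huv with ⟨hu, hv⟩ | ⟨hu, hv⟩
    · left
      rw [retractTo_of_mem haA hu, retractTo_of_mem haA hv,
        retractTo_of_mem_of_inter_eq haB hinter' hu, retractTo_of_mem_of_inter_eq haB hinter' hv]
      exact ⟨huv, rfl⟩
    · right
      rw [retractTo_of_mem haB hu, retractTo_of_mem haB hv,
        retractTo_of_mem_of_inter_eq haA hinter hu, retractTo_of_mem_of_inter_eq haA hinter hv]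
      exact ⟨huv, rfl⟩

theorem edist_le_edist_retractTo_add (hcover : A ∪ B = Set.univ) (hinter : A ∩ B = {a})
    (haA : a ∈ A) (haB : a ∈ B) (u v : V) :
    G.edist u v ≤ (G.induce A).edist (retractTo haA u) (retractTo haA v) +
      (G.induce B).edist (retractTo haB u) (retractTo haB v) := by
  calc G.edist u v
      ≤ G.edist (retractTo haA u) (retractTo haA v) +
          G.edist (retractTo haB u) (retractTo haB v) := by
        rcases retractTo_cases hcover hinter haA haB u with ⟨hu₁, hu₂⟩ | ⟨hu₁, hu₂⟩ <;>
          rcases retractTo_cases hcover hinter haA haB v with ⟨hv₁, hv₂⟩ | ⟨hv₁, hv₂⟩ <;>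
          simp only [hu₁, hu₂, hv₁, hv₂, edist_self, add_zero, zero_add, le_refl]
        · exact G.edist_triangle
        · rw [add_comm]
          exact G.edist_triangle
    _ ≤ _ := add_le_add ((Embedding.induce A).toHom.edist_le _ _)
          ((Embedding.induce B).toHom.edist_le _ _)

theorem edist_boxProdRetraction (hcover : A ∪ B = Set.univ) (hinter : A ∩ B = {a})
    (hedges : ∀ u v : V, G.Adj u v → (u ∈ A ∧ v ∈ A) ∨ (u ∈ B ∧ v ∈ B)) (haA : a ∈ A)
    (haB : a ∈ B) (u v : V) :
    (G.induce A □ G.induce B).edist (boxProdRetraction hinter hedges haA haB u)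
      (boxProdRetraction hinter hedges haA haB v) = G.edist u v :=
  le_antisymm ((boxProdRetraction hinter hedges haA haB).edist_le u v)
    ((edist_boxProd _ _).symm ▸ edist_le_edist_retractTo_add hcover hinter haA haB u v)

end VertexPasting

/-- Vertex-pasting of partial cubes: if a graph `G` is covered by two vertex
sets `A` and `B` meeting in a single vertex `a` (the pasted vertex), with every
edge lying inside `A` or inside `B`, and the subgraphs induced on `A` and on
`B` are partial cubes, then `G` is a partial cube. -/
theorem vertexPasting_partialCube {V : Type} (G : SimpleGraph V)
    (A B : Set V) (a : V)
    (hcover : A ∪ B = Set.univ) (hinter : A ∩ B = {a})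
    (hedges : ∀ u v : V, G.Adj u v → (u ∈ A ∧ v ∈ A) ∨ (u ∈ B ∧ v ∈ B))
    (h1 : IsPartialCube (G.induce A)) (h2 : IsPartialCube (G.induce B)) :
    IsPartialCube G := by
  have ha : a ∈ A ∩ B := hinter.symm ▸ rfl
  have : Nonempty V := ⟨a⟩
  exact (h1.boxProd h2).of_edist_eq (boxProdRetraction hinter hedges ha.1 ha.2)
    (edist_boxProdRetraction hcover hinter hedges ha.1 ha.2)
end
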